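/- Barr's theorem, proof-theoretic form: if T is an ∞-geometric theory and G is an ∞-geometric implication such that G is classically derivable from T in L_{∞ω}, then G is intuitionistically derivable from T. -/

import Mathlib

/-! A deep embedding of the infinitary language `L_{∞ω}` (de Bruijn indices for
bound variables, natural numbers naming free variables and predicate symbols),
together with Tait–Gentzen sequent calculi: a classical one with ordinal bounds
on proof-height and cut-rank, and an intuitionistic one (at most one succedent
formula). -/

/-- Terms: just variables. -/
inductive Tm : Type where
  | var : ℕ → Tm

/-- Formulae of `L_{∞ω}`: atoms, `∧`, `∨`, `→`, `¬`, `∀`, `∃` and set-indexed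
infinitary conjunctions `⋀` and disjunctions `⋁`. -/
inductive Fml : Type 1 where
  | atom : ℕ → List Tm → Fml
  | and : Fml → Fml → Fml
  | or : Fml → Fml → Fml
  | imp : Fml → Fml → Fml
  | neg : Fml → Fml
  | all : Fml → Fml
  | ex : Fml → Fml
  | conj : (ι : Type) → (ι → Fml) → Fml
  | disj : (ι : Type) → (ι → Fml) → Fml

namespace Fml

/-- The (ordinal) rank of a formula; proper subformulae have strictly smaller rank. -/
noncomputable def rank : Fml → Ordinal.{0}
  | atom _ _ => 0
  | and A B => max A.rank B.rank + 1
  | or A B => max A.rank B.rank + 1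
  | imp A B => max A.rank B.rank + 1
  | neg A => A.rank + 1
  | all A => A.rank + 1
  | ex A => A.rank + 1
  | conj _ f => Ordinal.lsub fun i => (f i).rank
  | disj _ f => Ordinal.lsub fun i => (f i).rank

end Fml

/-- Substitution in terms. -/
def Tm.subst (σ : ℕ → Tm) : Tm → Tm
  | .var n => σ n

/-- Lifting a substitution under a binder. -/
def liftSub (σ : ℕ → Tm) : ℕ → Tm
  | 0 => .var 0
  | n + 1 => match σ n with | .var m => .var (m + 1)

/-- Simultaneous substitution in formulae. -/
def Fml.subst (σ : ℕ → Tm) : Fml → Fml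
  | .atom p ts => .atom p (ts.map (Tm.subst σ))
  | .and A B => .and (A.subst σ) (B.subst σ)
  | .or A B => .or (A.subst σ) (B.subst σ)
  | .imp A B => .imp (A.subst σ) (B.subst σ)
  | .neg A => .neg (A.subst σ)
  | .all A => .all (A.subst (liftSub σ))
  | .ex A => .ex (A.subst (liftSub σ))
  | .conj ι f => .conj ι fun i => (f i).subst σ
  | .disj ι f => .disj ι fun i => (f i).subst σ

/-- `A.subst0 t` plugs the term `t` for the outermost bound variable of `A`;
if `B(x) = all A` then `B(t) = A.subst0 t`. -/
def Fml.subst0 (A : Fml) (t : Tm) : Fml :=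
  A.subst fun n => match n with | 0 => t | n + 1 => .var n

/-- Substituting the term `t` for the free variable `a`. -/
def Fml.substFree (A : Fml) (a : ℕ) (t : Tm) : Fml :=
  A.subst fun n => if n = a then t else .var n

/-- Free variables of a term. -/
def Tm.fv : Tm → Set ℕ
  | .var n => {n}

/-- Free variables of a formula. -/
def Fml.fv : Fml → Set ℕ
  | .atom _ ts => {n | ∃ t ∈ ts, n ∈ t.fv}
  | .and A B => A.fv ∪ B.fv
  | .or A B => A.fv ∪ B.fv
  | .imp A B => A.fv ∪ B.fv
  | .neg A => A.fv
  | .all A => {n | n + 1 ∈ A.fv}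
  | .ex A => {n | n + 1 ∈ A.fv}
  | .conj _ f => {n | ∃ i, n ∈ (f i).fv}
  | .disj _ f => {n | ∃ i, n ∈ (f i).fv}

/-- A sentence: a formula without free variables. -/
def Fml.Closed (A : Fml) : Prop := A.fv = ∅

/-- The classical sequent calculus for `L_{∞ω}`: `Derives α ρ Γ Δ` means the sequent
`Γ ⊢ Δ` has a derivation of height `≤ α` all of whose cut formulae have rank `< ρ`. -/
inductive Derives : Ordinal.{0} → Ordinal.{0} → List Fml → List Fml → Prop where
  | ax {α ρ Γ Δ A} : A ∈ Γ → A ∈ Δ → Derives α ρ Γ Δ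
  | wk {α ρ Γ Γ' Δ Δ'} : (∀ A ∈ Γ, A ∈ Γ') → (∀ A ∈ Δ, A ∈ Δ') →
      Derives α ρ Γ Δ → Derives α ρ Γ' Δ'
  | cut {α ρ Γ Δ C β₁ β₂} : β₁ < α → β₂ < α → Fml.rank C < ρ →
      Derives β₁ ρ Γ (C :: Δ) → Derives β₂ ρ (C :: Γ) Δ → Derives α ρ Γ Δ
  | negL {α ρ Γ Δ A β} : β < α → Derives β ρ Γ (A :: Δ) →
      Derives α ρ (.neg A :: Γ) Δ
  | negR {α ρ Γ Δ A β} : β < α → Derives β ρ (A :: Γ) Δ →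
      Derives α ρ Γ (.neg A :: Δ)
  | impL {α ρ Γ Δ A B β₁ β₂} : β₁ < α → β₂ < α →
      Derives β₁ ρ Γ (A :: Δ) → Derives β₂ ρ (B :: Γ) Δ →
      Derives α ρ (.imp A B :: Γ) Δ
  | impR {α ρ Γ Δ A B β} : β < α → Derives β ρ (A :: Γ) (B :: Δ) →
      Derives α ρ Γ (.imp A B :: Δ)
  | andL₁ {α ρ Γ Δ A B β} : β < α → Derives β ρ (A :: Γ) Δ →
      Derives α ρ (.and A B :: Γ) Δ
  | andL₂ {α ρ Γ Δ A B β} : β < α → Derives β ρ (B :: Γ) Δ →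
      Derives α ρ (.and A B :: Γ) Δ
  | andR {α ρ Γ Δ A B β₁ β₂} : β₁ < α → β₂ < α →
      Derives β₁ ρ Γ (A :: Δ) → Derives β₂ ρ Γ (B :: Δ) →
      Derives α ρ Γ (.and A B :: Δ)
  | orL {α ρ Γ Δ A B β₁ β₂} : β₁ < α → β₂ < α →
      Derives β₁ ρ (A :: Γ) Δ → Derives β₂ ρ (B :: Γ) Δ →
      Derives α ρ (.or A B :: Γ) Δ
  | orR₁ {α ρ Γ Δ A B β} : β < α → Derives β ρ Γ (A :: Δ) →
      Derives α ρ Γ (.or A B :: Δ)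
  | orR₂ {α ρ Γ Δ A B β} : β < α → Derives β ρ Γ (B :: Δ) →
      Derives α ρ Γ (.or A B :: Δ)
  | allL {α ρ Γ Δ A t β} : β < α → Derives β ρ (A.subst0 t :: Γ) Δ →
      Derives α ρ (.all A :: Γ) Δ
  | allR {α ρ Γ Δ A a β} : β < α → a ∉ Fml.fv (.all A) →
      (∀ B ∈ Γ, a ∉ B.fv) → (∀ B ∈ Δ, a ∉ B.fv) →
      Derives β ρ Γ (A.subst0 (.var a) :: Δ) → Derives α ρ Γ (.all A :: Δ)
  | exL {α ρ Γ Δ A a β} : β < α → a ∉ Fml.fv (.ex A) →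
      (∀ B ∈ Γ, a ∉ B.fv) → (∀ B ∈ Δ, a ∉ B.fv) →
      Derives β ρ (A.subst0 (.var a) :: Γ) Δ → Derives α ρ (.ex A :: Γ) Δ
  | exR {α ρ Γ Δ A t β} : β < α → Derives β ρ Γ (A.subst0 t :: Δ) →
      Derives α ρ Γ (.ex A :: Δ)
  | conjL {α ρ Γ Δ ι f β} (i : ι) : β < α → Derives β ρ (f i :: Γ) Δ →
      Derives α ρ (.conj ι f :: Γ) Δ
  | conjR {α ρ Γ Δ ι f} (β : ι → Ordinal.{0}) : (∀ i, β i < α) →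
      (∀ i : ι, Derives (β i) ρ Γ (f i :: Δ)) → Derives α ρ Γ (.conj ι f :: Δ)
  | disjL {α ρ Γ Δ ι f} (β : ι → Ordinal.{0}) : (∀ i, β i < α) →
      (∀ i : ι, Derives (β i) ρ (f i :: Γ) Δ) → Derives α ρ (.disj ι f :: Γ) Δ
  | disjR {α ρ Γ Δ ι f β} (i : ι) : β < α → Derives β ρ Γ (f i :: Δ) →
      Derives α ρ Γ (.disj ι f :: Δ)

/-- Classical derivability (with some height and some cut-rank). -/
def Derivable (Γ Δ : List Fml) : Prop := ∃ α ρ, Derives α ρ Γ Δ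

/-- The intuitionistic sequent calculus for `L_{∞ω}`: sequents have at most one
formula on the right (`none` = empty succedent). -/
inductive DerivesI : List Fml → Option Fml → Prop where
  | ax {Γ A} : A ∈ Γ → DerivesI Γ (some A)
  | wk {Γ Γ' S} : (∀ A ∈ Γ, A ∈ Γ') → DerivesI Γ S → DerivesI Γ' S
  | wkR {Γ A} : DerivesI Γ none → DerivesI Γ (some A)
  | cut {Γ S C} : DerivesI Γ (some C) → DerivesI (C :: Γ) S → DerivesI Γ S
  | negL {Γ A} : DerivesI Γ (some A) → DerivesI (.neg A :: Γ) none
  | negR {Γ A} : DerivesI (A :: Γ) none → DerivesI Γ (some (.neg A))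
  | impL {Γ S A B} : DerivesI Γ (some A) → DerivesI (B :: Γ) S →
      DerivesI (.imp A B :: Γ) S
  | impR {Γ A B} : DerivesI (A :: Γ) (some B) → DerivesI Γ (some (.imp A B))
  | andL₁ {Γ S A B} : DerivesI (A :: Γ) S → DerivesI (.and A B :: Γ) S
  | andL₂ {Γ S A B} : DerivesI (B :: Γ) S → DerivesI (.and A B :: Γ) S
  | andR {Γ A B} : DerivesI Γ (some A) → DerivesI Γ (some B) →
      DerivesI Γ (some (.and A B))
  | orL {Γ S A B} : DerivesI (A :: Γ) S → DerivesI (B :: Γ) S →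
      DerivesI (.or A B :: Γ) S
  | orR₁ {Γ A B} : DerivesI Γ (some A) → DerivesI Γ (some (.or A B))
  | orR₂ {Γ A B} : DerivesI Γ (some B) → DerivesI Γ (some (.or A B))
  | allL {Γ S A t} : DerivesI (A.subst0 t :: Γ) S → DerivesI (.all A :: Γ) S
  | allR {Γ A a} : a ∉ Fml.fv (.all A) → (∀ B ∈ Γ, a ∉ B.fv) →
      DerivesI Γ (some (A.subst0 (.var a))) → DerivesI Γ (some (.all A))
  | exL {Γ S A a} : a ∉ Fml.fv (.ex A) → (∀ B ∈ Γ, a ∉ B.fv) →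
      (∀ B, S = some B → a ∉ B.fv) →
      DerivesI (A.subst0 (.var a) :: Γ) S → DerivesI (.ex A :: Γ) S
  | exR {Γ A t} : DerivesI Γ (some (A.subst0 t)) → DerivesI Γ (some (.ex A))
  | conjL {Γ S ι f} (i : ι) : DerivesI (f i :: Γ) S → DerivesI (.conj ι f :: Γ) S
  | conjR {Γ ι f} : (∀ i : ι, DerivesI Γ (some (f i))) →
      DerivesI Γ (some (.conj ι f))
  | disjL {Γ S ι f} : (∀ i : ι, DerivesI (f i :: Γ) S) →
      DerivesI (.disj ι f :: Γ) S
  | disjR {Γ ι f} (i : ι) : DerivesI Γ (some (f i)) → DerivesI Γ (some (.disj ι f))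

/-- `⋁(Φ ∪ {A})` for an (indexed) set `Φ` of formulae and a formula `A`. -/
def Fml.disjInsert (A : Fml) {ι : Type} (f : ι → Fml) : Fml :=
  .disj (Option ι) fun o => o.elim A f

/-- `⋁Δ` for a finite list `Δ` of formulae. -/
def Fml.disjList (Δ : List Fml) : Fml :=
  .disj (Fin Δ.length) Δ.get

/-- `∞`-geometric formulae: built from atoms by `∧`, `∨`, `∃` and infinitary `⋁`. -/
inductive IsGeom : Fml → Prop where
  | atom (p ts) : IsGeom (.atom p ts)
  | and {A B} : IsGeom A → IsGeom B → IsGeom (.and A B)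
  | or {A B} : IsGeom A → IsGeom B → IsGeom (.or A B)
  | ex {A} : IsGeom A → IsGeom (.ex A)
  | disj {ι f} : (∀ i : ι, IsGeom (f i)) → IsGeom (.disj ι f)

/-- `∞`-geometric implications: generated from `A`, `¬A`, `A → B` (with `A`, `B`
`∞`-geometric) by `∀` and infinitary `⋀`. -/
inductive IsGeomImp : Fml → Prop where
  | base {A} : IsGeom A → IsGeomImp A
  | neg {A} : IsGeom A → IsGeomImp (.neg A)
  | imp {A B} : IsGeom A → IsGeom B → IsGeomImp (.imp A B)
  | all {A} : IsGeomImp A → IsGeomImp (.all A)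
  | conj {ι f} : (∀ i : ι, IsGeomImp (f i)) → IsGeomImp (.conj ι f)

/-!
Friedman's `A`-translation. Write `X^R` for `friedman R X`: atoms `P` become `P ∨ R`, an
infinitary disjunction gets the extra disjunct `R`, and the bodies of `∀` and `⋀` are
`R`-double-negated. A classical derivation of `Γ ⊢ Δ` turns into an intuitionistic derivation
of `R` from `Γ^R` and the `R`-negations `Δ^R → R`. A geometric formula `X` satisfies
`X ⊢ X^R` and `X^R ⊢ X ∨ R`; hence a geometric implication `H` satisfies `H ⊢ H^R`, in
particular `⋀T ⊢ (⋀T)^R`, and a classical consequence `D` of `⋀T` gives `⋀T, D^R → R ⊢ R`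
intuitionistically. After the `∀`s and `⋀`s of `G` are stripped by classical inversion, `G` is
`X`, `¬A` or `A → B`; with `R := X`, `¬A` or `B` respectively, `G^R ⊢ R` (using the
hypothesis `A` in the last two cases), so `R` and then `G` follow.

Eigenvariables of the classical derivation may occur in `R`, so the derivation is translated
along a substitution `σ` that leaves infinitely many variables fresh, and eigenvariables are
renamed on the way.
-/

lemma liftSub_succ (σ : ℕ → Tm) (n : ℕ) :
    liftSub σ (n + 1) = (σ n).subst fun k => .var (k + 1) := by
  cases h : σ n; simp [liftSub, h, Tm.subst]

def consSub (t : Tm) (σ : ℕ → Tm) : ℕ → Tm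
  | 0 => t
  | n + 1 => σ n

namespace Fml

lemma subst_subst (A : Fml) (σ τ : ℕ → Tm) :
    (A.subst σ).subst τ = A.subst fun n => (σ n).subst τ := by
  have hlift : ∀ σ τ : ℕ → Tm,
      (fun n => (liftSub σ n).subst (liftSub τ)) = liftSub fun n => (σ n).subst τ := by
    intro σ τ; funext n
    cases n with
    | zero => rfl
    | succ n => cases σ n; simp [liftSub_succ, Tm.subst]
  induction A generalizing σ τ with
  | atom p ts => simp only [Fml.subst, List.map_map]; congr 2
  | all A ih | ex A ih => simp only [Fml.subst, ih, hlift]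
  | conj ι f ih | disj ι f ih => simp only [Fml.subst, ih]
  | _ => simp_all [Fml.subst]

lemma subst_congr {A : Fml} {σ τ : ℕ → Tm} (h : ∀ n ∈ A.fv, σ n = τ n) :
    A.subst σ = A.subst τ := by
  induction A generalizing σ τ with
  | atom p ts =>
    simp only [Fml.subst]; congr 1
    refine List.map_congr_left fun t ht => ?_
    cases t with | var n => exact h n ⟨_, ht, rfl⟩
  | and A B ihA ihB | or A B ihA ihB | imp A B ihA ihB =>
    simp only [Fml.fv, Set.mem_union, or_imp, forall_and] at h
    simp only [Fml.subst, ihA h.1, ihB h.2]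
  | neg A ih => simp only [Fml.subst, ih h]
  | all A ih | ex A ih =>
    simp only [Fml.subst]; congr 1
    refine ih fun n hn => ?_
    cases n with
    | zero => rfl
    | succ n => simp [liftSub_succ, h n hn]
  | conj ι f ih | disj ι f ih =>
    simp only [Fml.subst]; congr 1; funext i; exact ih i fun n hn => h n ⟨i, hn⟩

lemma subst_var (A : Fml) : A.subst .var = A := by
  have hlift : liftSub .var = .var := by funext n; cases n <;> rfl
  induction A with
  | atom p ts =>
    simp only [Fml.subst]; congr
    exact (List.map_congr_left fun t _ => by cases t; rfl).trans (List.map_id ts)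
  | _ => simp_all [Fml.subst]

lemma Closed.subst_eq {A : Fml} (hA : A.Closed) (σ : ℕ → Tm) : A.subst σ = A :=
  (subst_congr (τ := .var) fun n hn => by simp [show A.fv = ∅ from hA] at hn).trans (subst_var A)

lemma subst_liftSub_subst0 (A : Fml) (σ : ℕ → Tm) (t : Tm) :
    (A.subst (liftSub σ)).subst0 t = A.subst (consSub t σ) := by
  rw [subst0, subst_subst]
  congr; funext n
  cases n with
  | zero => rfl
  | succ n => cases σ n; rfl

lemma subst0_subst (A : Fml) (σ : ℕ → Tm) (t : Tm) :
    (A.subst0 t).subst σ = (A.subst (liftSub σ)).subst0 (t.subst σ) := by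
  rw [subst_liftSub_subst0, subst0, subst_subst]
  congr; funext n; cases n <;> rfl

lemma fv_subst_subset (A : Fml) (σ : ℕ → Tm) :
    (A.subst σ).fv ⊆ ⋃ n ∈ A.fv, (σ n).fv := by
  induction A generalizing σ with
  | atom p ts =>
    rintro m ⟨_, ht, hm⟩
    obtain ⟨⟨n⟩, hn, rfl⟩ := List.mem_map.mp ht
    exact Set.mem_biUnion ⟨_, hn, rfl⟩ hm
  | and A B ihA ihB | or A B ihA ihB | imp A B ihA ihB =>
    rintro m (hm | hm)
    · obtain ⟨n, hn, hm⟩ := Set.mem_iUnion₂.mp (ihA σ hm)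
      exact Set.mem_biUnion (Or.inl hn) hm
    · obtain ⟨n, hn, hm⟩ := Set.mem_iUnion₂.mp (ihB σ hm)
      exact Set.mem_biUnion (Or.inr hn) hm
  | neg A ih => exact ih σ
  | all A ih | ex A ih =>
    intro m hm
    obtain ⟨_ | n, hn, hm⟩ := Set.mem_iUnion₂.mp (ih _ hm)
    · cases hm
    · rw [liftSub_succ] at hm
      cases h : σ n
      simp only [h, Tm.subst, Tm.fv, Set.mem_singleton_iff, Nat.add_right_cancel_iff] at hm
      exact Set.mem_biUnion (s := {n | n + 1 ∈ A.fv}) hn (by simp [h, Tm.fv, hm])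
  | conj ι f ih | disj ι f ih =>
    rintro m ⟨i, hm⟩
    obtain ⟨n, hn, hm⟩ := Set.mem_iUnion₂.mp (ih i σ hm)
    exact Set.mem_biUnion ⟨i, hn⟩ hm

lemma fv_subst0_subset (A : Fml) (t : Tm) : (A.subst0 t).fv ⊆ (Fml.all A).fv ∪ t.fv := by
  intro m hm
  obtain ⟨_ | n, hn, hm⟩ := Set.mem_iUnion₂.mp (fv_subst_subset A _ hm)
  · exact Or.inr hm
  · exact Or.inl (by rw [Set.mem_singleton_iff.mp hm]; exact hn)

def shift (A : Fml) : Fml := A.subst fun n => .var (n + 1)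

lemma shift_subst (A : Fml) (σ : ℕ → Tm) :
    (shift A).subst (liftSub σ) = shift (A.subst σ) := by
  simp only [shift, subst_subst, Tm.subst, liftSub_succ]

lemma shift_subst0 (A : Fml) (t : Tm) : (shift A).subst0 t = A := by
  rw [shift, subst0, subst_subst]
  exact subst_var A

lemma mem_fv_of_succ_mem_fv_shift {A : Fml} {n : ℕ} (h : n + 1 ∈ (shift A).fv) :
    n ∈ A.fv := by
  obtain ⟨m, hm, hn⟩ := Set.mem_iUnion₂.mp (fv_subst_subset A _ h)
  simp only [Tm.fv, Set.mem_singleton_iff, Nat.add_right_cancel_iff] at hn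
  exact hn ▸ hm

def dneg (R X : Fml) : Fml := .imp (.imp X R) R

lemma dneg_subst0 (R X : Fml) (t : Tm) : (dneg R X).subst0 t = dneg (R.subst0 t) (X.subst0 t) :=
  rfl

/-- Friedman's `R`-translation, with Kuroda's double negations under `∀` and `⋀`. -/
def friedman : Fml → Fml → Fml
  | R, .atom p ts => .or (.atom p ts) R
  | R, .and A B => .and (friedman R A) (friedman R B)
  | R, .or A B => .or (friedman R A) (friedman R B)
  | R, .imp A B => .imp (friedman R A) (friedman R B)
  | R, .neg A => .imp (friedman R A) R
  | R, .all A => .all (dneg (shift R) (friedman (shift R) A))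
  | R, .ex A => .ex (friedman (shift R) A)
  | R, .conj _ f => .conj _ fun i => dneg R (friedman R (f i))
  | R, .disj _ f => disjInsert R fun i => friedman R (f i)

lemma friedman_subst (R A : Fml) (σ : ℕ → Tm) :
    (friedman R A).subst σ = friedman (R.subst σ) (A.subst σ) := by
  induction A generalizing R σ with
  | all A ih | ex A ih => simp only [friedman, Fml.subst, dneg, ih, shift_subst]
  | conj ι f ih => simp only [friedman, Fml.subst, dneg, ih]
  | disj ι f ih =>
    simp only [friedman, Fml.subst, disjInsert]; congr; funext o; cases o <;> simp [ih]
  | _ => simp_all [friedman, Fml.subst]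

lemma friedman_shift_subst0 (R A : Fml) (t : Tm) :
    (friedman (shift R) A).subst0 t = friedman R (A.subst0 t) := by
  rw [subst0, friedman_subst, ← subst0, shift_subst0, subst0]

lemma friedman_body_subst0 (R A : Fml) (σ : ℕ → Tm) (c : ℕ) :
    (friedman (shift R) (A.subst (liftSub σ))).subst0 (.var c)
      = friedman R (A.subst (consSub (.var c) σ)) := by
  rw [friedman_shift_subst0, subst_liftSub_subst0]

lemma fv_friedman_subset (R A : Fml) : (friedman R A).fv ⊆ A.fv ∪ R.fv := by
  induction A generalizing R with
  | atom p ts => exact fun _ h => h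
  | and A B ihA ihB | or A B ihA ihB | imp A B ihA ihB =>
    rintro m (h | h)
    · exact (ihA R h).imp Or.inl id
    · exact (ihB R h).imp Or.inr id
  | neg A ih => rintro m (h | h); exacts [ih R h, Or.inr h]
  | all A ih =>
    rintro m ((h | h) | h)
    · exact (ih _ h).imp id mem_fv_of_succ_mem_fv_shift
    all_goals exact Or.inr (mem_fv_of_succ_mem_fv_shift h)
  | ex A ih => intro m h; exact (ih _ h).imp id mem_fv_of_succ_mem_fv_shift
  | conj ι f ih =>
    rintro m ⟨i, (h | h) | h⟩
    · exact (ih i R h).imp (fun h => ⟨i, h⟩) id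
    all_goals exact Or.inr h
  | disj ι f ih =>
    rintro m ⟨_ | i, h⟩
    · exact Or.inr h
    · exact (ih i R h).imp (fun h => ⟨i, h⟩) id

end Fml

open Fml

def substFv (σ : ℕ → Tm) : Set ℕ := ⋃ n, (σ n).fv

lemma substFv_consSub (c : ℕ) (σ : ℕ → Tm) :
    substFv (consSub (.var c) σ) ⊆ insert c (substFv σ) := by
  intro m hm
  obtain ⟨_ | n, hn⟩ := Set.mem_iUnion.mp hm
  · exact Or.inl hn
  · exact Or.inr (Set.mem_iUnion.mpr ⟨n, hn⟩)

lemma substFv_update (σ : ℕ → Tm) (a c : ℕ) :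
    substFv (Function.update σ a (.var c)) ⊆ insert c (substFv σ) := by
  intro m hm
  obtain ⟨n, hn⟩ := Set.mem_iUnion.mp hm
  by_cases hna : n = a
  · subst hna; rw [Function.update_self] at hn; exact Or.inl hn
  · rw [Function.update_of_ne hna] at hn; exact Or.inr (Set.mem_iUnion.mpr ⟨n, hn⟩)

section substFv

variable {R A : Fml} {σ : ℕ → Tm} {c : ℕ}

lemma notMem_fv_subst (hc : c ∉ substFv σ) : c ∉ (A.subst σ).fv := fun h => by
  obtain ⟨n, -, hn⟩ := Set.mem_iUnion₂.mp (fv_subst_subset A σ h)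
  exact hc (Set.mem_iUnion.mpr ⟨n, hn⟩)

lemma notMem_fv_friedman_subst (hc : c ∉ substFv σ ∪ R.fv) :
    c ∉ (friedman R (A.subst σ)).fv :=
  fun h => (fv_friedman_subset R _ h).elim (notMem_fv_subst (hc ∘ .inl)) (hc ∘ .inr)

lemma notMem_fv_imp_friedman_subst (hc : c ∉ substFv σ ∪ R.fv) :
    c ∉ (Fml.imp (friedman R (A.subst σ)) R).fv := by
  rintro (h | h)
  exacts [notMem_fv_friedman_subst hc h, hc (.inr h)]

end substFv

def HasFreshVars (σ : ℕ → Tm) (R : Fml) : Prop := (substFv σ ∪ R.fv)ᶜ.Infinite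

lemma HasFreshVars.of_subset_insert {σ τ : ℕ → Tm} {R : Fml} {c : ℕ} (h : HasFreshVars σ R)
    (hτ : substFv τ ⊆ insert c (substFv σ)) : HasFreshVars τ R :=
  (h.sdiff (Set.finite_singleton c)).mono <| by
    rintro m ⟨hm, hmc⟩ (hτm | hRm)
    · exact (hτ hτm).elim hmc fun hσm => hm (Or.inl hσm)
    · exact hm (Or.inr hRm)

namespace DerivesI

variable {Γ Γ' : List Fml} {S : Option Fml} {R X Y : Fml}

lemma mono (h : DerivesI Γ S) (hΓ : Γ ⊆ Γ') : DerivesI Γ' S := .wk (fun _ hA => hΓ hA) h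

lemma weaken (h : DerivesI Γ S) : DerivesI (X :: Γ) S := h.mono (List.subset_cons_self _ _)

lemma swap (h : DerivesI (X :: Y :: Γ) S) : DerivesI (Y :: X :: Γ) S :=
  h.mono (List.Perm.swap Y X Γ).subset

lemma mp (h₁ : DerivesI Γ (some (.imp X Y))) (h₂ : DerivesI Γ (some X)) :
    DerivesI Γ (some Y) :=
  h₁.cut (.impL h₂ (.ax List.mem_cons_self))

lemma cons_of_entails (hXY : DerivesI [X] (some Y)) (h : DerivesI (Y :: Γ) S) :
    DerivesI (X :: Γ) S :=
  (hXY.mono (by simp)).cut h.weaken.swap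

lemma imp_cons_of_entails (hXY : DerivesI [X] (some Y)) (h : DerivesI (.imp X R :: Γ) (some R)) :
    DerivesI (.imp Y R :: Γ) (some R) :=
  cons_of_entails (.impR (mp (.ax (by simp)) (hXY.mono (by simp)))) h

lemma dneg_cons (h : DerivesI (X :: Γ) (some R)) : DerivesI (dneg R X :: Γ) (some R) :=
  .impL (.impR h) (.ax List.mem_cons_self)

lemma imp_cons (hX : DerivesI (.imp X R :: Γ) (some R)) (hY : DerivesI (Y :: Γ) (some R)) :
    DerivesI (.imp X Y :: Γ) (some R) :=
  .cut (.impR (DerivesI.impL (.ax List.mem_cons_self) hY.weaken.swap).swap) hX.weaken.swap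

lemma imp_and_cons (hX : DerivesI (.imp X R :: Γ) (some R))
    (hY : DerivesI (.imp Y R :: Γ) (some R)) :
    DerivesI (.imp (.and X Y) R :: Γ) (some R) := by
  refine .cut (C := .imp X R) (.impR (.cut (C := .imp Y R) (.impR ?_) (hY.mono ?_))) hX.weaken.swap
  · exact .mp (X := .and X Y) (.ax (by simp)) (.andR (.ax (by simp)) (.ax List.mem_cons_self))
  · intro _; simp only [List.mem_cons]; tauto

lemma imp_imp_cons (hRY : DerivesI [R] (some Y)) (h : DerivesI (X :: .imp Y R :: Γ) (some R)) :
    DerivesI (.imp (.imp X Y) R :: Γ) (some R) := by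
  refine .mp (.ax List.mem_cons_self) (.impR (.cut (C := R) (.cut (C := .imp Y R) ?_ (h.mono ?_))
    (hRY.mono (by simp))))
  · exact .impR (.mp (X := .imp X Y) (.ax (by simp)) (.impR (.ax (by simp))))
  · intro _; simp only [List.mem_cons]; tauto

end DerivesI

lemma derivesI_friedman_exFalso (R X : Fml) {σ : ℕ → Tm} (hσ : HasFreshVars σ R) :
    DerivesI [R] (some (friedman R (X.subst σ))) := by
  induction X generalizing σ with
  | atom p ts => exact .orR₂ (.ax List.mem_cons_self)
  | and A B ihA ihB => exact .andR (ihA hσ) (ihB hσ)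
  | or A B ihA _ => exact .orR₁ (ihA hσ)
  | imp A B _ ihB => exact .impR ((ihB hσ).mono (by simp))
  | neg A _ => exact .impR (.ax (by simp))
  | all A _ =>
    obtain ⟨c, hc⟩ := hσ.nonempty
    refine .allR (a := c) (notMem_fv_friedman_subst (A := .all A) hc)
      (by simpa using hc ∘ .inr) ?_
    rw [dneg_subst0, shift_subst0, friedman_body_subst0]
    exact .impR (.ax (by simp))
  | ex A ih =>
    refine .exR (t := .var 0) ?_
    rw [friedman_body_subst0]
    exact ih (hσ.of_subset_insert (substFv_consSub 0 σ))
  | conj ι f _ => exact .conjR fun i => .impR (.ax (by simp))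
  | disj ι f _ => exact .disjR none (.ax List.mem_cons_self)

namespace IsGeom

variable {R X : Fml}

lemma subst (hX : IsGeom X) (σ : ℕ → Tm) : IsGeom (X.subst σ) := by
  induction hX generalizing σ with
  | atom p ts => exact .atom _ _
  | and _ _ ihA ihB => exact .and (ihA σ) (ihB σ)
  | or _ _ ihA ihB => exact .or (ihA σ) (ihB σ)
  | ex _ ih => exact .ex (ih _)
  | disj _ ih => exact .disj fun i => ih i σ

lemma derivesI_friedman (hX : IsGeom X) {σ : ℕ → Tm} (hσ : HasFreshVars σ R) :
    DerivesI [X.subst σ] (some (friedman R (X.subst σ))) := by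
  induction hX generalizing σ with
  | atom p ts => exact .orR₁ (.ax List.mem_cons_self)
  | and _ _ ihA ihB => exact .andR (.andL₁ (ihA hσ)) (.andL₂ (ihB hσ))
  | or _ _ ihA ihB => exact .orL (.orR₁ (ihA hσ)) (.orR₂ (ihB hσ))
  | @ex A _ ih =>
    obtain ⟨c, hc⟩ := hσ.nonempty
    refine .exL (a := c) (notMem_fv_subst (A := .ex A) (hc ∘ .inl)) (by simp) ?_ ?_
    · rintro _ ⟨⟩; exact notMem_fv_friedman_subst (A := .ex A) hc
    rw [subst_liftSub_subst0]
    refine .exR (t := .var c) ?_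
    rw [friedman_body_subst0]
    exact ih (hσ.of_subset_insert (substFv_consSub c σ))
  | disj _ ih => exact .disjL fun i => .disjR (some i) (ih i hσ)

lemma derivesI_or_of_friedman (hX : IsGeom X) {σ : ℕ → Tm} (hσ : HasFreshVars σ R) :
    DerivesI [friedman R (X.subst σ)] (some (.or (X.subst σ) R)) := by
  have hR {Y Γ} : DerivesI (R :: Γ) (some (.or Y R)) := .orR₂ (.ax List.mem_cons_self)
  induction hX generalizing σ with
  | atom p ts => exact .ax List.mem_cons_self
  | and _ _ ihA ihB =>
    refine .cut (.andL₁ (ihA hσ)) (.orL ?_ hR)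
    refine .cut ((DerivesI.andL₂ (ihB hσ)).mono (List.subset_cons_self _ _)) (.orL ?_ hR)
    exact .orR₁ (.andR (.ax (by simp)) (.ax (by simp)))
  | or _ _ ihA ihB =>
    exact .orL (.cons_of_entails (ihA hσ) (.orL (.orR₁ (.orR₁ (.ax (by simp)))) hR))
      (.cons_of_entails (ihB hσ) (.orL (.orR₁ (.orR₂ (.ax (by simp)))) hR))
  | @ex A _ ih =>
    obtain ⟨c, hc⟩ := hσ.nonempty
    refine .exL (a := c) (notMem_fv_friedman_subst (A := .ex A) hc) (by simp) ?_ ?_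
    · rintro _ ⟨⟩ (h | h)
      exacts [notMem_fv_subst (A := .ex A) (hc ∘ .inl) h, hc (.inr h)]
    rw [friedman_body_subst0]
    refine .cons_of_entails (ih (hσ.of_subset_insert (substFv_consSub c σ))) (.orL ?_ hR)
    refine .orR₁ (.exR (t := .var c) ?_)
    rw [subst_liftSub_subst0]
    exact .ax List.mem_cons_self
  | disj _ ih =>
    refine .disjL fun o => ?_
    cases o with
    | none => exact hR
    | some i => exact .cons_of_entails (ih i hσ) (.orL (.orR₁ (.disjR i (.ax (by simp)))) hR)

end IsGeom

lemma IsGeomImp.derivesI_friedman {R H : Fml} (hH : IsGeomImp H) {σ : ℕ → Tm}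
    (hσ : HasFreshVars σ R) : DerivesI [H.subst σ] (some (friedman R (H.subst σ))) := by
  induction hH generalizing σ with
  | base hX => exact hX.derivesI_friedman hσ
  | neg hA =>
    refine .impR (.cons_of_entails (hA.derivesI_or_of_friedman hσ) (.orL ?_ (.ax (by simp))))
    exact .wkR (DerivesI.negL (.ax List.mem_cons_self)).swap
  | @imp A B hA hB =>
    refine .impR (.cons_of_entails (hA.derivesI_or_of_friedman hσ) (.orL ?_ ?_))
    · exact .cut (C := B.subst σ) (.mp (.ax (List.mem_cons_of_mem _ List.mem_cons_self))
        (.ax List.mem_cons_self))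
        (.cons_of_entails (hB.derivesI_friedman hσ) (.ax List.mem_cons_self))
    · exact .cons_of_entails (derivesI_friedman_exFalso R _ hσ) (.ax List.mem_cons_self)
  | @all H _ ih =>
    obtain ⟨c, hc⟩ := hσ.nonempty
    refine .allR (a := c) (notMem_fv_friedman_subst (A := .all H) hc) ?_ ?_
    · simpa using notMem_fv_subst (A := .all H) (hc ∘ .inl)
    rw [dneg_subst0, shift_subst0, friedman_body_subst0]
    refine .impR (DerivesI.swap (.allL (t := .var c) ?_))
    rw [subst_liftSub_subst0]
    exact .cons_of_entails (ih (hσ.of_subset_insert (substFv_consSub c σ)))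
      (.mp (.ax (by simp)) (.ax List.mem_cons_self))
  | conj _ ih =>
    refine .conjR fun i => .impR (DerivesI.swap (.conjL i ?_))
    exact .cons_of_entails (ih i hσ) (.mp (.ax (by simp)) (.ax List.mem_cons_self))

def friedmanCtx (R : Fml) (σ : ℕ → Tm) (Γ Δ : List Fml) : List Fml :=
  Γ.map (fun A => friedman R (A.subst σ)) ++ Δ.map (fun D => .imp (friedman R (D.subst σ)) R)

section friedmanCtx

variable {R : Fml} {σ : ℕ → Tm} {Γ Δ : List Fml}

lemma friedmanCtx_subset {Γ' Δ' : List Fml} (hΓ : Γ ⊆ Γ') (hΔ : Δ ⊆ Δ') :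
    friedmanCtx R σ Γ Δ ⊆ friedmanCtx R σ Γ' Δ' :=
  List.append_subset.mpr ⟨List.Subset.trans (List.map_subset _ hΓ) (List.subset_append_left _ _),
    List.Subset.trans (List.map_subset _ hΔ) (List.subset_append_right _ _)⟩

lemma friedmanCtx_cons_left {A : Fml} :
    friedmanCtx R σ (A :: Γ) Δ = friedman R (A.subst σ) :: friedmanCtx R σ Γ Δ :=
  rfl

lemma derivesI_friedmanCtx_cons_right {D : Fml} {S : Option Fml} :
    DerivesI (friedmanCtx R σ Γ (D :: Δ)) S ↔
      DerivesI (.imp (friedman R (D.subst σ)) R :: friedmanCtx R σ Γ Δ) S :=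
  ⟨fun h => h.mono List.perm_middle.subset, fun h => h.mono List.perm_middle.symm.subset⟩

lemma notMem_fv_of_mem_friedmanCtx {B : Fml} {c : ℕ} (hB : B ∈ friedmanCtx R σ Γ Δ)
    (hc : c ∉ substFv σ ∪ R.fv) : c ∉ B.fv := by
  rcases List.mem_append.mp hB with hB | hB <;> obtain ⟨A, -, rfl⟩ := List.mem_map.mp hB
  exacts [notMem_fv_friedman_subst hc, notMem_fv_imp_friedman_subst hc]

lemma friedmanCtx_update {a c : ℕ} (hΓ : ∀ B ∈ Γ, a ∉ B.fv)
    (hΔ : ∀ B ∈ Δ, a ∉ B.fv) :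
    friedmanCtx R (Function.update σ a (.var c)) Γ Δ = friedmanCtx R σ Γ Δ := by
  have hB {B : Fml} (ha : a ∉ B.fv) : B.subst (Function.update σ a (.var c)) = B.subst σ :=
    subst_congr fun n hn => Function.update_of_ne (by rintro rfl; exact ha hn) _ _
  simp only [friedmanCtx]
  congr 1 <;> refine List.map_congr_left fun B hB' => ?_
  · rw [hB (hΓ B hB')]
  · rw [hB (hΔ B hB')]

end friedmanCtx

lemma subst0_var_subst_update {A : Fml} {a : ℕ} (ha : a + 1 ∉ A.fv) (σ : ℕ → Tm)
    (c : ℕ) :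
    (A.subst0 (.var a)).subst (Function.update σ a (.var c))
      = (A.subst (liftSub σ)).subst0 (.var c) := by
  rw [subst0_subst, Tm.subst, Function.update_self]
  congr 1
  refine subst_congr fun n hn => ?_
  cases n with
  | zero => rfl
  | succ n => rw [liftSub_succ, liftSub_succ, Function.update_of_ne (by rintro rfl; exact ha hn)]

section eigenvariable

variable {R A : Fml} {Γ Δ : List Fml} {a : ℕ} {σ : ℕ → Tm}

/-- The eigenvariable `a` may occur in `R`, so it is renamed to a variable `c` that is fresh
for `σ` and `R`. -/
lemma derivesI_friedmanCtx_allR (ha : a + 1 ∉ A.fv) (hΓ : ∀ B ∈ Γ, a ∉ B.fv)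
    (hΔ : ∀ B ∈ Δ, a ∉ B.fv)
    (ih : ∀ {σ}, HasFreshVars σ R →
      DerivesI (friedmanCtx R σ Γ (A.subst0 (.var a) :: Δ)) (some R))
    (hσ : HasFreshVars σ R) : DerivesI (friedmanCtx R σ Γ (.all A :: Δ)) (some R) := by
  obtain ⟨c, hc⟩ := hσ.nonempty
  have h := ih (hσ.of_subset_insert (substFv_update σ a c))
  rw [derivesI_friedmanCtx_cons_right, subst0_var_subst_update ha, friedmanCtx_update hΓ hΔ] at h
  rw [derivesI_friedmanCtx_cons_right]
  refine .mp (.ax List.mem_cons_self) (.allR (a := c) (notMem_fv_friedman_subst (A := .all A) hc)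
    ?_ ?_)
  · simp only [List.mem_cons, forall_eq_or_imp]
    exact ⟨notMem_fv_imp_friedman_subst (A := .all A) hc,
      fun B hB => notMem_fv_of_mem_friedmanCtx hB hc⟩
  · rw [dneg_subst0, shift_subst0, friedman_shift_subst0]
    exact .impR h.weaken.swap

lemma derivesI_friedmanCtx_exL (ha : a + 1 ∉ A.fv) (hΓ : ∀ B ∈ Γ, a ∉ B.fv)
    (hΔ : ∀ B ∈ Δ, a ∉ B.fv)
    (ih : ∀ {σ}, HasFreshVars σ R →
      DerivesI (friedmanCtx R σ (A.subst0 (.var a) :: Γ) Δ) (some R))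
    (hσ : HasFreshVars σ R) : DerivesI (friedmanCtx R σ (.ex A :: Γ) Δ) (some R) := by
  obtain ⟨c, hc⟩ := hσ.nonempty
  have h := ih (hσ.of_subset_insert (substFv_update σ a c))
  rw [friedmanCtx_cons_left, subst0_var_subst_update ha, friedmanCtx_update hΓ hΔ] at h
  refine .exL (a := c) (notMem_fv_friedman_subst (A := .ex A) hc)
    (fun B hB => notMem_fv_of_mem_friedmanCtx hB hc) (by rintro _ ⟨⟩; exact hc ∘ .inr) ?_
  rwa [friedman_shift_subst0]

end eigenvariable

theorem Derives.derivesI_friedmanCtx {α ρ : Ordinal} {Γ Δ : List Fml} (h : Derives α ρ Γ Δ)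
    {R : Fml} {σ : ℕ → Tm} (hσ : HasFreshVars σ R) :
    DerivesI (friedmanCtx R σ Γ Δ) (some R) := by
  have right {R σ Γ Δ D S} := @derivesI_friedmanCtx_cons_right R σ Γ Δ D S
  induction h generalizing σ with
  | ax hΓ hΔ =>
    exact .mp (.ax (List.mem_append_right _ (List.mem_map_of_mem hΔ)))
      (.ax (List.mem_append_left _ (List.mem_map_of_mem hΓ)))
  | wk hΓ hΔ _ ih => exact (ih hσ).mono (friedmanCtx_subset hΓ hΔ)
  | cut _ _ _ _ _ ih₁ ih₂ => exact .cut (.impR (ih₂ hσ)) (right.mp (ih₁ hσ))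
  | negL _ _ ih => exact right.mp (ih hσ)
  | negR _ _ ih => exact right.mpr (.dneg_cons (ih hσ))
  | impL _ _ _ _ ih₁ ih₂ => exact .imp_cons (right.mp (ih₁ hσ)) (ih₂ hσ)
  | @impR _ _ Γ Δ A B _ _ _ ih =>
    refine right.mpr (.imp_imp_cons (derivesI_friedman_exFalso R B hσ) ?_)
    exact (ih hσ).mono (List.cons_subset_cons _ List.perm_middle.subset)
  | andL₁ _ _ ih => exact .andL₁ (ih hσ)
  | andL₂ _ _ ih => exact .andL₂ (ih hσ)
  | andR _ _ _ _ ih₁ ih₂ =>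
    exact right.mpr (.imp_and_cons (right.mp (ih₁ hσ)) (right.mp (ih₂ hσ)))
  | orL _ _ _ _ ih₁ ih₂ => exact .orL (ih₁ hσ) (ih₂ hσ)
  | orR₁ _ _ ih =>
    exact right.mpr (.imp_cons_of_entails (.orR₁ (.ax List.mem_cons_self)) (right.mp (ih hσ)))
  | orR₂ _ _ ih =>
    exact right.mpr (.imp_cons_of_entails (.orR₂ (.ax List.mem_cons_self)) (right.mp (ih hσ)))
  | @allL _ _ Γ Δ A t _ _ _ ih =>
    refine .allL (t := t.subst σ) ?_
    rw [dneg_subst0, shift_subst0, friedman_shift_subst0, ← subst0_subst]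
    exact .dneg_cons (ih hσ)
  | allR _ ha hΓ hΔ _ ih => exact derivesI_friedmanCtx_allR ha hΓ hΔ ih hσ
  | exL _ ha hΓ hΔ _ ih => exact derivesI_friedmanCtx_exL ha hΓ hΔ ih hσ
  | @exR _ _ Γ Δ A t _ _ _ ih =>
    refine right.mpr (.imp_cons_of_entails (.exR (t := t.subst σ) ?_) (right.mp (ih hσ)))
    rw [friedman_shift_subst0, ← subst0_subst]
    exact .ax List.mem_cons_self
  | conjL i _ _ ih => exact .conjL i (.dneg_cons (ih hσ))
  | conjR _ _ _ ih =>
    exact right.mpr (.mp (.ax List.mem_cons_self)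
      (.conjR fun i => .impR (right.mp (ih i hσ)).weaken.swap))
  | disjL _ _ _ ih =>
    refine .disjL fun o => ?_
    cases o with
    | none => exact .ax List.mem_cons_self
    | some i => exact ih i hσ
  | disjR i _ _ ih =>
    exact right.mpr (.imp_cons_of_entails (.disjR (some i) (.ax List.mem_cons_self))
      (right.mp (ih hσ)))

theorem Derives.mono_rank {α ρ ρ' : Ordinal} {Γ Δ : List Fml} (h : Derives α ρ Γ Δ)
    (hρ : ρ ≤ ρ') : Derives α ρ' Γ Δ := by
  induction h with
  | ax h₁ h₂ => exact .ax h₁ h₂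
  | wk h₁ h₂ _ ih => exact .wk h₁ h₂ (ih hρ)
  | cut h₁ h₂ hC _ _ ih₁ ih₂ =>
    exact .cut h₁ h₂ (hC.trans_le hρ) (ih₁ hρ) (ih₂ hρ)
  | negL h _ ih => exact .negL h (ih hρ)
  | negR h _ ih => exact .negR h (ih hρ)
  | impL h₁ h₂ _ _ ih₁ ih₂ => exact .impL h₁ h₂ (ih₁ hρ) (ih₂ hρ)
  | impR h _ ih => exact .impR h (ih hρ)
  | andL₁ h _ ih => exact .andL₁ h (ih hρ)
  | andL₂ h _ ih => exact .andL₂ h (ih hρ)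
  | andR h₁ h₂ _ _ ih₁ ih₂ => exact .andR h₁ h₂ (ih₁ hρ) (ih₂ hρ)
  | orL h₁ h₂ _ _ ih₁ ih₂ => exact .orL h₁ h₂ (ih₁ hρ) (ih₂ hρ)
  | orR₁ h _ ih => exact .orR₁ h (ih hρ)
  | orR₂ h _ ih => exact .orR₂ h (ih hρ)
  | allL h _ ih => exact .allL h (ih hρ)
  | allR h ha hΓ hΔ _ ih => exact .allR h ha hΓ hΔ (ih hρ)
  | exL h ha hΓ hΔ _ ih => exact .exL h ha hΓ hΔ (ih hρ)
  | exR h _ ih => exact .exR h (ih hρ)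
  | conjL i h _ ih => exact .conjL i h (ih hρ)
  | conjR β h _ ih => exact .conjR β h fun i => ih i hρ
  | disjL β h _ ih => exact .disjL β h fun i => ih i hρ
  | disjR i h _ ih => exact .disjR i h (ih hρ)

namespace Derivable

variable {Γ Δ : List Fml}

theorem cut {C : Fml} (h₁ : Derivable Γ (C :: Δ)) (h₂ : Derivable (C :: Γ) Δ) :
    Derivable Γ Δ := by
  obtain ⟨α₁, ρ₁, h₁⟩ := h₁
  obtain ⟨α₂, ρ₂, h₂⟩ := h₂
  refine ⟨max α₁ α₂ + 1, max (max ρ₁ ρ₂) (C.rank + 1), .cut (C := C) ?_ ?_ ?_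
    (h₁.mono_rank ((le_max_left _ _).trans (le_max_left _ _)))
    (h₂.mono_rank ((le_max_right _ _).trans (le_max_left _ _)))⟩
  · exact Order.lt_add_one_iff.mpr (le_max_left _ _)
  · exact Order.lt_add_one_iff.mpr (le_max_right _ _)
  · exact (Order.lt_add_one_iff.mpr le_rfl).trans_le (le_max_right _ _)

theorem of_all {A : Fml} (h : Derivable Γ [.all A]) (t : Tm) : Derivable Γ [A.subst0 t] := by
  obtain ⟨α, ρ, h⟩ := h
  exact cut ⟨α, ρ, .wk (fun _ => id) (by simp) h⟩
    ⟨1, 0, .allL zero_lt_one (.ax List.mem_cons_self List.mem_cons_self)⟩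

theorem of_conj {ι : Type} {f : ι → Fml} (h : Derivable Γ [.conj ι f]) (i : ι) :
    Derivable Γ [f i] := by
  obtain ⟨α, ρ, h⟩ := h
  exact cut ⟨α, ρ, .wk (fun _ => id) (by simp) h⟩
    ⟨1, 0, .conjL i zero_lt_one (.ax List.mem_cons_self List.mem_cons_self)⟩

end Derivable

/-- The witness fixes `F` and sends every other `n` to `2 * n + 1`, so the even variables outside
`F` stay fresh. -/
lemma exists_hasFreshVars_fixing {F : Set ℕ} (hF : F.Finite) {R : Fml} (hR : R.fv ⊆ F) :
    ∃ σ, HasFreshVars σ R ∧ ∀ A : Fml, A.fv ⊆ F → A.subst σ = A := by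
  classical
  refine ⟨fun n => if n ∈ F then .var n else .var (2 * n + 1), ?_, fun A hA => ?_⟩
  · have hev := Set.infinite_range_of_injective (mul_right_injective₀ (two_ne_zero (α := ℕ)))
    refine (hev.sdiff hF).mono ?_
    rintro _ ⟨⟨k, rfl⟩, hk : 2 * k ∉ F⟩ (h | h)
    · obtain ⟨n, hn⟩ := Set.mem_iUnion.mp h
      dsimp only at hn
      split_ifs at hn with hnF <;> simp only [Tm.fv, Set.mem_singleton_iff] at hn
      · exact hk (hn ▸ hnF)
      · omega
    · exact hk (hR h)
  · exact (subst_congr fun n hn => if_pos (hA hn)).trans (subst_var A)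

section Barr

variable {ι : Type} {T : ι → Fml}

lemma derivesI_of_derivable_of_friedman (hT : ∀ i, IsGeomImp (T i))
    (hTc : (Fml.conj ι T).Closed) {D R : Fml} {σ : ℕ → Tm} (hσ : HasFreshVars σ R)
    (hDσ : D.subst σ = D) (h : Derivable [.conj ι T] [D]) {Γ : List Fml}
    (hΓ : .conj ι T ∈ Γ)
    (hD : DerivesI (friedman R D :: Γ) (some R)) : DerivesI Γ (some R) := by
  obtain ⟨α, ρ, h⟩ := h
  have hmain := h.derivesI_friedmanCtx hσ
  have hTR := (IsGeomImp.conj hT).derivesI_friedman hσ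
  simp only [friedmanCtx, List.map_cons, List.map_nil, List.cons_append, List.nil_append,
    Closed.subst_eq hTc, hDσ] at hmain
  rw [Closed.subst_eq hTc] at hTR
  refine .cut (.impR hD) (.cut (hTR.mono (by simpa using hΓ)) (hmain.mono ?_))
  intro _; simp only [List.mem_cons, List.not_mem_nil]; tauto

lemma derivesI_of_derivable_geom (hT : ∀ i, IsGeomImp (T i)) (hTc : (Fml.conj ι T).Closed)
    {X : Fml} (hX : IsGeom X) (hfin : X.fv.Finite) (h : Derivable [.conj ι T] [X]) :
    DerivesI [.conj ι T] (some X) := by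
  obtain ⟨σ, hσ, hfix⟩ := exists_hasFreshVars_fixing hfin subset_rfl
  have hXR := hX.derivesI_or_of_friedman hσ
  rw [hfix X subset_rfl] at hXR
  exact derivesI_of_derivable_of_friedman hT hTc hσ (hfix X subset_rfl) h List.mem_cons_self
    (.cons_of_entails hXR (.orL (.ax List.mem_cons_self) (.ax List.mem_cons_self)))

lemma derivesI_of_derivable_neg (hT : ∀ i, IsGeomImp (T i)) (hTc : (Fml.conj ι T).Closed)
    {A : Fml} (hA : IsGeom A) (hfin : A.fv.Finite) (h : Derivable [.conj ι T] [.neg A]) :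
    DerivesI [.conj ι T] (some (.neg A)) := by
  obtain ⟨σ, hσ, hfix⟩ := exists_hasFreshVars_fixing (R := .neg A) hfin subset_rfl
  have hAR := hA.derivesI_friedman hσ
  rw [hfix A subset_rfl] at hAR
  refine .negR (.cut (derivesI_of_derivable_of_friedman hT hTc hσ (hfix (.neg A) subset_rfl) h
    (by simp) ?_) (.negL (.ax (by simp))))
  exact .mp (.ax List.mem_cons_self) (hAR.mono (by simp))

lemma derivesI_of_derivable_imp (hT : ∀ i, IsGeomImp (T i)) (hTc : (Fml.conj ι T).Closed)
    {A B : Fml} (hA : IsGeom A) (hB : IsGeom B) (hfin : (A.fv ∪ B.fv).Finite)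
    (h : Derivable [.conj ι T] [.imp A B]) : DerivesI [.conj ι T] (some (.imp A B)) := by
  obtain ⟨σ, hσ, hfix⟩ := exists_hasFreshVars_fixing hfin (R := B) Set.subset_union_right
  have hAR := hA.derivesI_friedman hσ
  have hBR := hB.derivesI_or_of_friedman hσ
  rw [hfix A Set.subset_union_left] at hAR
  rw [hfix B Set.subset_union_right] at hBR
  refine .impR (derivesI_of_derivable_of_friedman hT hTc hσ (hfix (.imp A B) subset_rfl) h
    (by simp) ?_)
  exact .cut (.mp (.ax List.mem_cons_self) (hAR.mono (by simp)))
    (.cons_of_entails hBR (.orL (.ax List.mem_cons_self) (.ax List.mem_cons_self)))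

theorem IsGeomImp.derivesI_of_derivable (hT : ∀ i, IsGeomImp (T i))
    (hTc : (Fml.conj ι T).Closed) {H : Fml} (hH : IsGeomImp H) (hfin : H.fv.Finite)
    (h : Derivable [.conj ι T] [H]) : DerivesI [.conj ι T] (some H) := by
  suffices ∀ σ, (H.subst σ).fv.Finite → Derivable [.conj ι T] [H.subst σ] →
      DerivesI [.conj ι T] (some (H.subst σ)) by
    simpa only [subst_var] using this .var (by rwa [subst_var]) (by rwa [subst_var])
  clear hfin h
  induction hH with
  | base hX => exact fun σ => derivesI_of_derivable_geom hT hTc (hX.subst σ)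
  | neg hA => exact fun σ => derivesI_of_derivable_neg hT hTc (hA.subst σ)
  | imp hA hB => exact fun σ => derivesI_of_derivable_imp hT hTc (hA.subst σ) (hB.subst σ)
  | all _ ih =>
    intro σ hfin h
    obtain ⟨c, hc⟩ := hfin.exists_notMem
    refine .allR (a := c) hc (by simp [show (Fml.conj ι T).fv = ∅ from hTc]) ?_
    have hc' := h.of_all (.var c)
    have hfin' := (hfin.union (Set.finite_singleton c)).subset (fv_subst0_subset _ (.var c))
    rw [subst_liftSub_subst0] at hc' hfin' ⊢
    exact ih _ hfin' hc'
  | conj _ ih =>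
    intro σ hfin h
    exact .conjR fun i => ih i σ (hfin.subset fun n hn => ⟨i, hn⟩) (h.of_conj i)

end Barr

/-- Barr's theorem, proof-theoretic form: if `T` is an `∞`-geometric theory (a set
of sentences that are `∞`-geometric implications) and `G` an `∞`-geometric
implication (a sentence) classically derivable from `T` in `L_{∞ω}` (i.e. the
sequent `⋀T ⊢ G` is classically derivable), then `G` is intuitionistically
derivable from `T`. -/
theorem barr_theorem (ι : Type) (T : ι → Fml)
    (hT : ∀ i, IsGeomImp (T i) ∧ (T i).Closed)
    (G : Fml) (hG : IsGeomImp G) (hGc : G.Closed)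
    (h : Derivable [Fml.conj ι T] [G]) :
    DerivesI [Fml.conj ι T] (some G) := by
  have hTc : (Fml.conj ι T).Closed :=
    Set.eq_empty_of_forall_notMem fun n ⟨i, hn⟩ => by rwa [(hT i).2] at hn
  exact hG.derivesI_of_derivable (fun i => (hT i).1) hTc (by rw [hGc]; exact Set.finite_empty) h
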